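/- With the gauge generators t_Y, t_W^a (a=1,2,3), t_C^a (a=1,…,8) and t_{B−L} defined on K_F as below, the following trace identities hold: Tr(t_Y²) = −80N/3, Tr(t_W^a·t_W^b) = −16N·δ_{ab}, Tr(t_C^a·t_C^b) = −16N·δ_{ab}, Tr(t_{B−L}²) = −32N/3, Tr(t_Y·t_{B−L}) = −32N/3, and Tr(t_Y·t_W^a) = Tr(t_Y·t_C^a) = Tr(t_{B−L}·t_W^a) = Tr(t_{B−L}·t_C^a) = Tr(t_W^a·t_C^b) = 0 for all a, b. Moreover, setting t_{Z'} := t_{B−L} − (2/5)·t_Y, one has Tr(t_Y·t_{Z'}) = 0 and Tr(t_{Z'}²) = −32N/5. -/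
import Mathlib


open Matrix Complex
open scoped BigOperators

noncomputable section

/-- Index set of the internal space `K₀ = (ℂ² ⊕ ℂ²⊗ℂ³) ⊗ ℂ^N`. -/
abbrev I0 (N : ℕ) := (Fin 2 ⊕ Fin 2 × Fin 3) × Fin N

/-- Index set of `K_F = K₀ ⊗ ℂ⁴`, the `Fin 4` factor labelling the sectors
`R = 0, L = 1, R̄ = 2, L̄ = 3`. -/
abbrev IF (N : ℕ) := Fin 4 × I0 N

/-- Endomorphisms of `K₀`. -/
abbrev Op0 (N : ℕ) := Matrix (I0 N) (I0 N) ℂ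

/-- Endomorphisms of `K_F`. -/
abbrev OpF (N : ℕ) := Matrix (IF N) (IF N) ℂ

/-- Build an operator on `K_F` from a `4×4` matrix of blocks in `End(K₀)`. -/
def mk4 {N : ℕ} (B : Matrix (Fin 4) (Fin 4) (Op0 N)) : OpF N :=
  fun p q => B p.1 q.1 p.2 q.2

/-- Build an operator on `K₀` from a lepton block and a quark block (each a matrix of
generation matrices). -/
def op0 {N : ℕ} (fl : Fin 2 → Fin 2 → Matrix (Fin N) (Fin N) ℂ)
    (fq : Fin 2 × Fin 3 → Fin 2 × Fin 3 → Matrix (Fin N) (Fin N) ℂ) : Op0 N :=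
  fun p q =>
    match p.1, q.1 with
    | Sum.inl i, Sum.inl i' => fl i i' p.2 q.2
    | Sum.inr j, Sum.inr j' => fq j j' p.2 q.2
    | _, _ => 0

/-- `q` is a quaternion, i.e. of the form `[[α, β], [−β̄, ᾱ]]`. -/
def IsQuat (q : Matrix (Fin 2) (Fin 2) ℂ) : Prop :=
  q 1 1 = star (q 0 0) ∧ q 1 0 = -star (q 0 1)

/-- `ã = (a ⊕ a⊗1₃)⊗1_N` for `a ∈ M₂(ℂ)`. -/
def tild {N : ℕ} (a : Matrix (Fin 2) (Fin 2) ℂ) : Op0 N :=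
  op0 (fun i i' => a i i' • 1)
    (fun j j' => if j.2 = j'.2 then a j.1 j'.1 • 1 else 0)

/-- `Y₀ = diag(Y_ν, Y_e) ⊕ diag(1₃⊗Y_u, 1₃⊗Y_d)`. -/
def Y0 {N : ℕ} (Yν Ye Yu Yd : Matrix (Fin N) (Fin N) ℂ) : Op0 N :=
  op0 (fun i i' => if i = i' then (if i = 0 then Yν else Ye) else 0)
    (fun j j' => if j = j' then (if j.1 = 0 then Yu else Yd) else 0)

/-- `M₀ = p_ν ⊗ m₀ ⊕ 0`. -/
def M0 {N : ℕ} (m0 : Matrix (Fin N) (Fin N) ℂ) : Op0 N :=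
  op0 (fun i i' => if i = 0 ∧ i' = 0 then m0 else 0) (fun _ _ => 0)

/-- The finite Dirac operator `D_F`. -/
def DF {N : ℕ} (s : ℂ) (Yν Ye Yu Yd m0 : Matrix (Fin N) (Fin N) ℂ) : OpF N :=
  mk4 !![0, -(Y0 Yν Ye Yu Yd)ᴴ, s • (M0 m0)ᴴ, 0;
         Y0 Yν Ye Yu Yd, 0, 0, 0;
         M0 m0, 0, 0, -(Y0 Yν Ye Yu Yd)ᵀ;
         0, 0, (Y0 Yν Ye Yu Yd).map (starRingEnd ℂ), 0]

/-- The bimodule `Ω¹_F` of standard-model finite 1-forms. -/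
def Omega1F {N : ℕ} (Yν Ye Yu Yd : Matrix (Fin N) (Fin N) ℂ) : Set (OpF N) :=
  {w | ∃ q1 q2 : Matrix (Fin 2) (Fin 2) ℂ, IsQuat q1 ∧ IsQuat q2 ∧
    w = mk4 !![0, (Y0 Yν Ye Yu Yd)ᴴ * tild q1, 0, 0;
               tild q2 * Y0 Yν Ye Yu Yd, 0, 0, 0;
               0, 0, 0, 0;
               0, 0, 0, 0]}

/-- The bimodule `Ω¹_σ`. -/
def Omega1σ {N : ℕ} (m0 : Matrix (Fin N) (Fin N) ℂ) : Set (OpF N) :=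
  {w | ∃ z1 z2 : ℂ,
    w = mk4 !![0, 0, z2 • (M0 m0)ᴴ, 0;
               0, 0, 0, 0;
               z1 • M0 m0, 0, 0, 0;
               0, 0, 0, 0]}

/-- `q_λ = diag(λ, λ̄)`. -/
def qmat (l : ℂ) : Matrix (Fin 2) (Fin 2) ℂ := !![l, 0; 0, star l]

/-- Block acting as `μ·1` on the lepton sector and as `1₂⊗m⊗1_N` on the quark sector. -/
def lsqc {N : ℕ} (μ : ℂ) (m : Matrix (Fin 3) (Fin 3) ℂ) : Op0 N :=
  op0 (fun i i' => if i = i' then μ • 1 else 0)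
    (fun j j' => if j.1 = j'.1 then m j.2 j'.2 • 1 else 0)

/-- The extended representation `π(λ,q,m,μ)` of `A_F^ext = ℂ⊕ℍ⊕M₃(ℂ)⊕ℂ` on `K_F`. -/
def rep {N : ℕ} (l : ℂ) (q : Matrix (Fin 2) (Fin 2) ℂ)
    (m : Matrix (Fin 3) (Fin 3) ℂ) (μ : ℂ) : OpF N :=
  mk4 !![tild (qmat l), 0, 0, 0;
         0, tild q, 0, 0;
         0, 0, lsqc μ m, 0;
         0, 0, 0, lsqc μ m]

/-- The image of the opposite representation of `A_F^ext` (the algebra `B`). -/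
def Bop {N : ℕ} (l μ : ℂ) (q : Matrix (Fin 2) (Fin 2) ℂ)
    (m : Matrix (Fin 3) (Fin 3) ℂ) : OpF N :=
  mk4 !![lsqc μ m, 0, 0, 0;
         0, lsqc μ m, 0, 0;
         0, 0, tild (qmat l), 0;
         0, 0, 0, tild q]

end

noncomputable section

/-- Block-diagonal element of `End(K₀)` with values `c_ν, c_e` on leptons and
`c_u, c_d` on quarks. -/
def dDiag {N : ℕ} (cν ce cu cd : ℂ) : Op0 N :=
  op0 (fun i i' => if i = i' then (if i = 0 then cν else ce) • 1 else 0)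
    (fun j j' => if j = j' then (if j.1 = 0 then cu else cd) • 1 else 0)

/-- Entrywise complex conjugation of an operator on `K₀`. -/
def conj0 {N : ℕ} (X : Op0 N) : Op0 N := X.map (starRingEnd ℂ)

/-- The hypercharge generator `t_Y`. -/
def tY {N : ℕ} : OpF N :=
  mk4 !![dDiag 0 (-2 * I) (4 * I / 3) (-2 * I / 3), 0, 0, 0;
         0, dDiag (-I) (-I) (I / 3) (I / 3), 0, 0;
         0, 0, conj0 (dDiag 0 (-2 * I) (4 * I / 3) (-2 * I / 3)), 0;
         0, 0, 0, conj0 (dDiag (-I) (-I) (I / 3) (I / 3))]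

/-- The Pauli matrices. -/
def pauli : Fin 3 → Matrix (Fin 2) (Fin 2) ℂ :=
  ![!![0, 1; 1, 0], !![0, -I; I, 0], !![1, 0; 0, -1]]

/-- The weak isospin generators `t_W^a`. -/
def tW {N : ℕ} (a : Fin 3) : OpF N :=
  mk4 !![0, 0, 0, 0;
         0, tild (I • pauli a), 0, 0;
         0, 0, 0, 0;
         0, 0, 0, conj0 (tild (I • pauli a))]

/-- Block acting as `0` on leptons and as `1₂⊗c⊗1_N` on quarks. -/
def colOp {N : ℕ} (c : Matrix (Fin 3) (Fin 3) ℂ) : Op0 N :=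
  op0 (fun _ _ => 0) (fun j j' => if j.1 = j'.1 then c j.2 j'.2 • 1 else 0)

/-- The colour generators `t_C^a` built from Gell-Mann-type matrices `λ^a`. -/
def tC {N : ℕ} (lam : Fin 8 → Matrix (Fin 3) (Fin 3) ℂ) (a : Fin 8) : OpF N :=
  mk4 !![colOp (I • lam a), 0, 0, 0;
         0, colOp (I • lam a), 0, 0;
         0, 0, conj0 (colOp (I • lam a)), 0;
         0, 0, 0, conj0 (colOp (I • lam a))]

/-- The `B−L` generator `t_{B−L}`. -/
def tBL {N : ℕ} : OpF N :=
  mk4 !![dDiag (-I) (-I) (I / 3) (I / 3), 0, 0, 0;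
         0, dDiag (-I) (-I) (I / 3) (I / 3), 0, 0;
         0, 0, dDiag I I (-I / 3) (-I / 3), 0;
         0, 0, 0, dDiag I I (-I / 3) (-I / 3)]

end


noncomputable section Helpers

abbrev SX := Fin 2 ⊕ Fin 2 × Fin 3
abbrev SS := Fin 4 × SX

def lift0 {N : ℕ} (A : Matrix SX SX ℂ) : Op0 N :=
  fun p q => if p.2 = q.2 then A p.1 q.1 else 0

def liftF {N : ℕ} (A : Matrix SS SS ℂ) : OpF N :=
  fun p q => if p.2.2 = q.2.2 then A (p.1, p.2.1) (q.1, q.2.1) else 0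

lemma trace_liftF_mul {N : ℕ} (A B : Matrix SS SS ℂ) :
    Matrix.trace (liftF A * liftF B : OpF N) = N * Matrix.trace (A * B) := by
  have key : ∀ (x : SS) (g : Fin N),
      (∑ q : IF N, liftF A (x.1, x.2, g) q * liftF B q (x.1, x.2, g))
        = ∑ y : SS, A x y * B y x := by
    intro x g
    rw [show (∑ q : IF N, liftF A (x.1, x.2, g) q * liftF B q (x.1, x.2, g))
        = ∑ t : Fin 4, ∑ y : SX, ∑ h : Fin N,
            liftF A (x.1, x.2, g) (t, y, h) * liftF B (t, y, h) (x.1, x.2, g) by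
      rw [Fintype.sum_prod_type]; exact Finset.sum_congr rfl fun t _ => Fintype.sum_prod_type _]
    simp only [liftF, mul_ite, ite_mul, zero_mul, mul_zero]
    simp [Finset.sum_ite_eq, Fintype.sum_prod_type]
  have : Matrix.trace (liftF A * liftF B : OpF N)
      = ∑ x : SS, ∑ g : Fin N, ∑ q : IF N,
          liftF A (x.1, x.2, g) q * liftF B q (x.1, x.2, g) := by
    simp only [Matrix.trace, Matrix.diag, Matrix.mul_apply]
    rw [Fintype.sum_prod_type, Fintype.sum_prod_type]
    exact Finset.sum_congr rfl fun s _ => (Fintype.sum_prod_type _)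
  rw [this]
  simp only [key, Finset.sum_const, Finset.card_univ, Fintype.card_fin, nsmul_eq_mul]
  rw [← Finset.mul_sum]
  congr 1

end Helpers

noncomputable section Helpers2

def dDiag' (cν ce cu cd : ℂ) : Matrix SX SX ℂ :=
  Matrix.of fun x y => match x, y with
  | Sum.inl i, Sum.inl i' => if i = i' then (if i = 0 then cν else ce) else 0
  | Sum.inr j, Sum.inr j' => if j = j' then (if j.1 = 0 then cu else cd) else 0
  | _, _ => 0

def tild' (a : Matrix (Fin 2) (Fin 2) ℂ) : Matrix SX SX ℂ :=
  Matrix.of fun x y => match x, y with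
  | Sum.inl i, Sum.inl i' => a i i'
  | Sum.inr j, Sum.inr j' => if j.2 = j'.2 then a j.1 j'.1 else 0
  | _, _ => 0

def colOp' (c : Matrix (Fin 3) (Fin 3) ℂ) : Matrix SX SX ℂ :=
  Matrix.of fun x y => match x, y with
  | Sum.inl _, Sum.inl _ => 0
  | Sum.inr j, Sum.inr j' => if j.1 = j'.1 then c j.2 j'.2 else 0
  | _, _ => 0

@[simp] lemma lift0_zero {N : ℕ} : (lift0 0 : Op0 N) = 0 := by
  funext p q; simp [lift0]

lemma dDiag_eq {N : ℕ} (cν ce cu cd : ℂ) :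
    (dDiag cν ce cu cd : Op0 N) = lift0 (dDiag' cν ce cu cd) := by
  funext ⟨x, g⟩ ⟨y, h⟩
  rcases x with i | j <;> rcases y with i' | j' <;>
    simp [dDiag, dDiag', op0, lift0, Matrix.one_apply,
      apply_ite (fun M : Matrix (Fin N) (Fin N) ℂ => M g h)] <;>
    split_ifs <;> simp

lemma tild_eq {N : ℕ} (a : Matrix (Fin 2) (Fin 2) ℂ) :
    (tild a : Op0 N) = lift0 (tild' a) := by
  funext ⟨x, g⟩ ⟨y, h⟩
  rcases x with i | j <;> rcases y with i' | j' <;>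
    simp [tild, tild', op0, lift0, Matrix.one_apply,
      apply_ite (fun M : Matrix (Fin N) (Fin N) ℂ => M g h)] <;>
    split_ifs <;> simp [mul_comm]

lemma colOp_eq {N : ℕ} (c : Matrix (Fin 3) (Fin 3) ℂ) :
    (colOp c : Op0 N) = lift0 (colOp' c) := by
  funext ⟨x, g⟩ ⟨y, h⟩
  rcases x with i | j <;> rcases y with i' | j' <;>
    simp [colOp, colOp', op0, lift0, Matrix.one_apply,
      apply_ite (fun M : Matrix (Fin N) (Fin N) ℂ => M g h)] <;>
    split_ifs <;> simp [mul_comm]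

lemma conj0_lift0 {N : ℕ} (A : Matrix SX SX ℂ) :
    (conj0 (lift0 A) : Op0 N) = lift0 (A.map (starRingEnd ℂ)) := by
  funext p q
  simp [conj0, lift0, Matrix.map_apply, apply_ite (starRingEnd ℂ)]

def mk4' (A : Fin 4 → Fin 4 → Matrix SX SX ℂ) : Matrix SS SS ℂ :=
  Matrix.of fun p q => A p.1 q.1 p.2 q.2

lemma mk4_eq_liftF {N : ℕ} (B : Matrix (Fin 4) (Fin 4) (Op0 N))
    (A : Fin 4 → Fin 4 → Matrix SX SX ℂ) (h : ∀ s t, B s t = lift0 (A s t)) :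
    mk4 B = liftF (mk4' A) := by
  funext p q
  simp [mk4, liftF, mk4', h, lift0]

end Helpers2

noncomputable section Helpers3

def AY : Fin 4 → Fin 4 → Matrix SX SX ℂ :=
  ![![dDiag' 0 (-2 * I) (4 * I / 3) (-2 * I / 3), 0, 0, 0],
    ![0, dDiag' (-I) (-I) (I / 3) (I / 3), 0, 0],
    ![0, 0, (dDiag' 0 (-2 * I) (4 * I / 3) (-2 * I / 3)).map (starRingEnd ℂ), 0],
    ![0, 0, 0, (dDiag' (-I) (-I) (I / 3) (I / 3)).map (starRingEnd ℂ)]]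

lemma tY_eq {N : ℕ} : (tY : OpF N) = liftF (mk4' AY) := by
  rw [tY]
  apply mk4_eq_liftF
  intro s t
  fin_cases s <;> fin_cases t <;>
    simp [AY, dDiag_eq, conj0_lift0, Matrix.vecHead, Matrix.vecTail]

def AW (a : Fin 3) : Fin 4 → Fin 4 → Matrix SX SX ℂ :=
  ![![0, 0, 0, 0],
    ![0, tild' (I • pauli a), 0, 0],
    ![0, 0, 0, 0],
    ![0, 0, 0, (tild' (I • pauli a)).map (starRingEnd ℂ)]]

lemma tW_eq {N : ℕ} (a : Fin 3) : (tW a : OpF N) = liftF (mk4' (AW a)) := by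
  rw [tW]
  apply mk4_eq_liftF
  intro s t
  fin_cases s <;> fin_cases t <;>
    simp [AW, tild_eq, conj0_lift0, Matrix.vecHead, Matrix.vecTail]

def AC (lam : Fin 8 → Matrix (Fin 3) (Fin 3) ℂ) (a : Fin 8) :
    Fin 4 → Fin 4 → Matrix SX SX ℂ :=
  ![![colOp' (I • lam a), 0, 0, 0],
    ![0, colOp' (I • lam a), 0, 0],
    ![0, 0, (colOp' (I • lam a)).map (starRingEnd ℂ), 0],
    ![0, 0, 0, (colOp' (I • lam a)).map (starRingEnd ℂ)]]

lemma tC_eq {N : ℕ} (lam : Fin 8 → Matrix (Fin 3) (Fin 3) ℂ) (a : Fin 8) :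
    (tC lam a : OpF N) = liftF (mk4' (AC lam a)) := by
  rw [tC]
  apply mk4_eq_liftF
  intro s t
  fin_cases s <;> fin_cases t <;>
    simp [AC, colOp_eq, conj0_lift0, Matrix.vecHead, Matrix.vecTail]

def ABL : Fin 4 → Fin 4 → Matrix SX SX ℂ :=
  ![![dDiag' (-I) (-I) (I / 3) (I / 3), 0, 0, 0],
    ![0, dDiag' (-I) (-I) (I / 3) (I / 3), 0, 0],
    ![0, 0, dDiag' I I (-I / 3) (-I / 3), 0],
    ![0, 0, 0, dDiag' I I (-I / 3) (-I / 3)]]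

lemma tBL_eq {N : ℕ} : (tBL : OpF N) = liftF (mk4' ABL) := by
  rw [tBL]
  apply mk4_eq_liftF
  intro s t
  fin_cases s <;> fin_cases t <;>
    simp [ABL, dDiag_eq, Matrix.vecHead, Matrix.vecTail]

lemma trace_mk4'_mul (A B : Fin 4 → Fin 4 → Matrix SX SX ℂ) :
    Matrix.trace (mk4' A * mk4' B) = ∑ s : Fin 4, ∑ t : Fin 4,
      Matrix.trace (A s t * B t s) := by
  have : Matrix.trace (mk4' A * mk4' B)
      = ∑ s : Fin 4, ∑ x : SX, ∑ t : Fin 4, ∑ y : SX,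
          A s t x y * B t s y x := by
    simp only [Matrix.trace, Matrix.diag, Matrix.mul_apply, mk4', Matrix.of_apply]
    rw [Fintype.sum_prod_type]
    exact Finset.sum_congr rfl fun s _ => Finset.sum_congr rfl fun x _ =>
      Fintype.sum_prod_type _
  rw [this]
  refine Finset.sum_congr rfl fun s _ => ?_
  rw [Finset.sum_comm]
  exact Finset.sum_congr rfl fun t _ => by
    simp [Matrix.trace, Matrix.diag, Matrix.mul_apply]

end Helpers3

noncomputable section Helpers4

lemma trD (a b c d a' b' c' d' : ℂ) :
    Matrix.trace (dDiag' a b c d * dDiag' a' b' c' d')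
      = a * a' + b * b' + 3 * (c * c') + 3 * (d * d') := by
  simp [Matrix.trace, Matrix.diag, Matrix.mul_apply, dDiag',
    Fintype.sum_sum_type, Fintype.sum_prod_type, Fin.sum_univ_succ]
  ring

lemma trDT (a b c d : ℂ) (m : Matrix (Fin 2) (Fin 2) ℂ) :
    Matrix.trace (dDiag' a b c d * tild' m)
      = a * m 0 0 + b * m 1 1 + 3 * (c * m 0 0) + 3 * (d * m 1 1) := by
  simp [Matrix.trace, Matrix.diag, Matrix.mul_apply, dDiag', tild',
    Fintype.sum_sum_type, Fintype.sum_prod_type, Fin.sum_univ_succ]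
  ring

lemma trT (m m' : Matrix (Fin 2) (Fin 2) ℂ) :
    Matrix.trace (tild' m * tild' m') = 4 * Matrix.trace (m * m') := by
  simp [Matrix.trace, Matrix.diag, Matrix.mul_apply, tild',
    Fintype.sum_sum_type, Fintype.sum_prod_type, Fin.sum_univ_succ]
  ring

lemma trC (c c' : Matrix (Fin 3) (Fin 3) ℂ) :
    Matrix.trace (colOp' c * colOp' c') = 2 * Matrix.trace (c * c') := by
  simp [Matrix.trace, Matrix.diag, Matrix.mul_apply, colOp',
    Fintype.sum_sum_type, Fintype.sum_prod_type, Fin.sum_univ_succ]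
  ring

lemma trDC (a b cu cd : ℂ) (m : Matrix (Fin 3) (Fin 3) ℂ) :
    Matrix.trace (dDiag' a b cu cd * colOp' m) = (cu + cd) * Matrix.trace m := by
  simp [Matrix.trace, Matrix.diag, Matrix.mul_apply, dDiag', colOp',
    Fintype.sum_sum_type, Fintype.sum_prod_type, Fin.sum_univ_succ]
  ring

lemma trTC (p : Matrix (Fin 2) (Fin 2) ℂ) (m : Matrix (Fin 3) (Fin 3) ℂ) :
    Matrix.trace (tild' p * colOp' m) = Matrix.trace p * Matrix.trace m := by
  simp [Matrix.trace, Matrix.diag, Matrix.mul_apply, tild', colOp',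
    Fintype.sum_sum_type, Fintype.sum_prod_type, Fin.sum_univ_succ]
  ring

lemma dDiag'_map (a b c d : ℂ) :
    (dDiag' a b c d).map (starRingEnd ℂ)
      = dDiag' (star a) (star b) (star c) (star d) := by
  funext x y
  rcases x with i | j <;> rcases y with i' | j' <;>
    simp [dDiag', Matrix.map_apply, apply_ite (starRingEnd ℂ)]

lemma tild'_map (m : Matrix (Fin 2) (Fin 2) ℂ) :
    (tild' m).map (starRingEnd ℂ) = tild' (m.map (starRingEnd ℂ)) := by
  funext x y
  rcases x with i | j <;> rcases y with i' | j' <;>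
    simp [tild', Matrix.map_apply, apply_ite (starRingEnd ℂ)]

lemma colOp'_map (m : Matrix (Fin 3) (Fin 3) ℂ) :
    (colOp' m).map (starRingEnd ℂ) = colOp' (m.map (starRingEnd ℂ)) := by
  funext x y
  rcases x with i | j <;> rcases y with i' | j' <;>
    simp [colOp', Matrix.map_apply, apply_ite (starRingEnd ℂ)]

end Helpers4

noncomputable section Helpers5

lemma hYY {N : ℕ} : Matrix.trace ((tY : OpF N) * tY) = -(80 * (N : ℂ)) / 3 := by
  rw [tY_eq, trace_liftF_mul, trace_mk4'_mul]
  simp [AY, Fin.sum_univ_succ, Matrix.vecHead, Matrix.vecTail, dDiag'_map, trD,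
    Complex.conj_I, map_div₀]
  ring_nf
  simp [Complex.I_sq]
  ring

end Helpers5

noncomputable section Helpers6

lemma smul_map_star (l : Matrix (Fin 3) (Fin 3) ℂ) (h : lᴴ = l) :
    (Complex.I • l).map (starRingEnd ℂ) = (-Complex.I) • lᵀ := by
  funext k k'
  have : (starRingEnd ℂ) (l k k') = l k' k := by
    conv_rhs => rw [← h]
    simp [Matrix.conjTranspose_apply]
  simp [Matrix.map_apply, Matrix.smul_apply, this, smul_eq_mul]
  try ring

lemma hWW {N : ℕ} (a b : Fin 3) : Matrix.trace ((tW a : OpF N) * tW b)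
    = if a = b then -(16 * (N : ℂ)) else 0 := by
  rw [tW_eq, tW_eq, trace_liftF_mul, trace_mk4'_mul]
  simp only [AW, Fin.sum_univ_succ, Matrix.vecHead, Matrix.vecTail]
  fin_cases a <;> fin_cases b <;>
    simp [trT, tild'_map, pauli, Matrix.trace_fin_two, Matrix.mul_apply,
      Fin.sum_univ_succ, Matrix.smul_apply, Matrix.map_apply, Complex.conj_I,
      Matrix.vecHead, Matrix.vecTail] <;>
    ring_nf <;> simp [Complex.I_sq] <;> ring

lemma hCC {N : ℕ} (lam : Fin 8 → Matrix (Fin 3) (Fin 3) ℂ)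
    (hherm : ∀ a, (lam a)ᴴ = lam a)
    (horth : ∀ a b, Matrix.trace (lam a * lam b) = if a = b then 2 else 0)
    (a b : Fin 8) : Matrix.trace ((tC lam a : OpF N) * tC lam b)
    = if a = b then -(16 * (N : ℂ)) else 0 := by
  rw [tC_eq, tC_eq, trace_liftF_mul, trace_mk4'_mul]
  simp only [AC, Fin.sum_univ_succ, Matrix.vecHead, Matrix.vecTail,
    colOp'_map, smul_map_star _ (hherm a), smul_map_star _ (hherm b)]
  have hT := horth a b
  have hT' : Matrix.trace ((lam a)ᵀ * (lam b)ᵀ) = if a = b then 2 else 0 := by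
    rw [← Matrix.transpose_mul, Matrix.trace_transpose, Matrix.trace_mul_comm, hT]
  simp [trC, Matrix.smul_mul, Matrix.mul_smul, Matrix.trace_smul, smul_eq_mul, hT, hT',
    Matrix.trace_zero, Matrix.zero_mul, Matrix.mul_zero]
  by_cases hab : a = b <;> simp [hab] <;> ring_nf <;> simp [Complex.I_sq] <;> ring

lemma hBLBL {N : ℕ} : Matrix.trace ((tBL : OpF N) * tBL) = -(32 * (N : ℂ)) / 3 := by
  rw [tBL_eq, trace_liftF_mul, trace_mk4'_mul]
  simp [ABL, Fin.sum_univ_succ, Matrix.vecHead, Matrix.vecTail, trD]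
  ring_nf
  simp [Complex.I_sq]
  ring

lemma hYBL {N : ℕ} : Matrix.trace ((tY : OpF N) * tBL) = -(32 * (N : ℂ)) / 3 := by
  rw [tY_eq, tBL_eq, trace_liftF_mul, trace_mk4'_mul]
  simp [AY, ABL, Fin.sum_univ_succ, Matrix.vecHead, Matrix.vecTail, dDiag'_map, trD,
    Complex.conj_I, map_div₀]
  ring_nf
  simp [Complex.I_sq]
  ring

lemma hYW {N : ℕ} (a : Fin 3) : Matrix.trace ((tY : OpF N) * tW a) = 0 := by
  rw [tY_eq, tW_eq, trace_liftF_mul, trace_mk4'_mul]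
  simp only [AY, AW, Fin.sum_univ_succ, Matrix.vecHead, Matrix.vecTail]
  fin_cases a <;>
    simp [trDT, dDiag'_map, tild'_map, pauli, Matrix.smul_apply, Matrix.map_apply,
      Complex.conj_I, map_div₀, Matrix.vecHead, Matrix.vecTail] <;>
    ring_nf <;> simp [Complex.I_sq] <;> ring_nf

lemma hYC {N : ℕ} (lam : Fin 8 → Matrix (Fin 3) (Fin 3) ℂ)
    (hherm : ∀ a, (lam a)ᴴ = lam a) (htr : ∀ a, Matrix.trace (lam a) = 0)
    (a : Fin 8) : Matrix.trace ((tY : OpF N) * tC lam a) = 0 := by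
  rw [tY_eq, tC_eq, trace_liftF_mul, trace_mk4'_mul]
  simp [AY, AC, Fin.sum_univ_succ, Matrix.vecHead, Matrix.vecTail, dDiag'_map,
    colOp'_map, smul_map_star _ (hherm a), trDC, Matrix.trace_smul, smul_eq_mul,
    Matrix.trace_transpose, htr, Complex.conj_I, map_div₀]

lemma hBLW {N : ℕ} (a : Fin 3) : Matrix.trace ((tBL : OpF N) * tW a) = 0 := by
  rw [tBL_eq, tW_eq, trace_liftF_mul, trace_mk4'_mul]
  simp only [ABL, AW, Fin.sum_univ_succ, Matrix.vecHead, Matrix.vecTail]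
  fin_cases a <;>
    simp [trDT, tild'_map, pauli, Matrix.smul_apply, Matrix.map_apply,
      Complex.conj_I, Matrix.vecHead, Matrix.vecTail] <;>
    ring_nf <;> simp [Complex.I_sq] <;> ring_nf

lemma hBLC {N : ℕ} (lam : Fin 8 → Matrix (Fin 3) (Fin 3) ℂ)
    (hherm : ∀ a, (lam a)ᴴ = lam a) (htr : ∀ a, Matrix.trace (lam a) = 0)
    (a : Fin 8) : Matrix.trace ((tBL : OpF N) * tC lam a) = 0 := by
  rw [tBL_eq, tC_eq, trace_liftF_mul, trace_mk4'_mul]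
  simp [ABL, AC, Fin.sum_univ_succ, Matrix.vecHead, Matrix.vecTail,
    colOp'_map, smul_map_star _ (hherm a), trDC, Matrix.trace_smul, smul_eq_mul,
    Matrix.trace_transpose, htr]

lemma hWC {N : ℕ} (lam : Fin 8 → Matrix (Fin 3) (Fin 3) ℂ)
    (hherm : ∀ a, (lam a)ᴴ = lam a) (htr : ∀ a, Matrix.trace (lam a) = 0)
    (a : Fin 3) (b : Fin 8) :
    Matrix.trace ((tW a : OpF N) * tC lam b) = 0 := by
  rw [tW_eq, tC_eq, trace_liftF_mul, trace_mk4'_mul]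
  simp [AW, AC, Fin.sum_univ_succ, Matrix.vecHead, Matrix.vecTail,
    colOp'_map, tild'_map, smul_map_star _ (hherm b), trTC, Matrix.trace_smul,
    smul_eq_mul, Matrix.trace_transpose, htr]

end Helpers6

/-- trace identities among the gauge generators `t_Y`, `t_W^a`, `t_C^a`,
`t_{B−L}`, and the kinetic-mixing-free generator `t_{Z'} = t_{B−L} − (2/5)t_Y`. -/
theorem stmt7 (N : ℕ) (lam : Fin 8 → Matrix (Fin 3) (Fin 3) ℂ)
    (hherm : ∀ a, (lam a)ᴴ = lam a)
    (htr : ∀ a, Matrix.trace (lam a) = 0)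
    (horth : ∀ a b, Matrix.trace (lam a * lam b) = if a = b then 2 else 0) :
    Matrix.trace ((tY : OpF N) * tY) = -(80 * (N : ℂ)) / 3 ∧
    (∀ a b, Matrix.trace ((tW a : OpF N) * tW b)
      = if a = b then -(16 * (N : ℂ)) else 0) ∧
    (∀ a b, Matrix.trace ((tC lam a : OpF N) * tC lam b)
      = if a = b then -(16 * (N : ℂ)) else 0) ∧
    Matrix.trace ((tBL : OpF N) * tBL) = -(32 * (N : ℂ)) / 3 ∧
    Matrix.trace ((tY : OpF N) * tBL) = -(32 * (N : ℂ)) / 3 ∧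
    (∀ a, Matrix.trace ((tY : OpF N) * tW a) = 0) ∧
    (∀ a, Matrix.trace ((tY : OpF N) * tC lam a) = 0) ∧
    (∀ a, Matrix.trace ((tBL : OpF N) * tW a) = 0) ∧
    (∀ a, Matrix.trace ((tBL : OpF N) * tC lam a) = 0) ∧
    (∀ a b, Matrix.trace ((tW a : OpF N) * tC lam b) = 0) ∧
    Matrix.trace ((tY : OpF N) * (tBL - (2 / 5 : ℂ) • tY)) = 0 ∧
    Matrix.trace (((tBL : OpF N) - (2 / 5 : ℂ) • tY) * (tBL - (2 / 5 : ℂ) • tY))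
      = -(32 * (N : ℂ)) / 5 := by
  have h1 : Matrix.trace ((tY : OpF N) * tY) = -(80 * (N : ℂ)) / 3 := hYY
  have h2 : Matrix.trace ((tBL : OpF N) * tBL) = -(32 * (N : ℂ)) / 3 := hBLBL
  have h3 : Matrix.trace ((tY : OpF N) * tBL) = -(32 * (N : ℂ)) / 3 := hYBL
  have h3' : Matrix.trace ((tBL : OpF N) * tY) = -(32 * (N : ℂ)) / 3 := by
    rw [Matrix.trace_mul_comm]; exact h3
  refine ⟨h1, hWW, hCC lam hherm horth, h2, h3, hYW, hYC lam hherm htr, hBLW,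
    hBLC lam hherm htr, hWC lam hherm htr, ?_, ?_⟩
  · rw [Matrix.mul_sub, Matrix.trace_sub, Matrix.mul_smul, Matrix.trace_smul,
      h1, h3, smul_eq_mul]
    ring
  · simp only [Matrix.sub_mul, Matrix.mul_sub, Matrix.smul_mul, Matrix.mul_smul,
      Matrix.trace_sub, Matrix.trace_smul, smul_eq_mul, h1, h2, h3, h3']
    ring
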